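/- Fix ε, a ∈ ℂ and x > 0. Let u, E, p, q : (0,∞) → ℂ be differentiable at x with u(x) ≠ 0 and E(x) ≠ 0. Define the 2×2 complex matrices σ₃ = diag(1,−1), J(x) = (εx/(4u(x)))·[[0, p(x)],[q(x), 0]], K(x) = (u(x)/x)·[[ε, E(x)],[−1/E(x), −ε]], and for λ ∈ ℂ, λ ≠ 0, Λ(λ,x) = −ixσ₃ − (ia/(2λ))σ₃ − (x/λ)J(x) + (ix/(2λ²))K(x) and X(λ,x) = −iλσ₃ + (ia/(2x))σ₃ − J(x) − (i/(2λ))K(x). Then the zero-curvature identity ∂Λ/∂x(λ,x) − ∂X/∂λ(λ,x) + Λ(λ,x)X(λ,x) − X(λ,x)Λ(λ,x) = 0 holds for every λ ≠ 0 if and only if all five equations of the D7 compatibility system with parameters (ε, a) hold at x. -/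

import Mathlib

/-!
Write `Λ = A₀ + A₁λ⁻¹ + A₂λ⁻²` and `X = λB₋₁ + B₀ + B₁λ⁻¹`. Since `A₀ = x B₋₁` and
`A₂ = -x B₁`, the `λ¹` and `λ⁰` parts of `[Λ, X]` cancel, and `Λ_x - X_λ` has no such parts
either; so the zero-curvature expression is `λ⁻¹ M₁ + λ⁻² M₂`, which vanishes for all `λ ≠ 0`
iff `M₁ = M₂ = 0`. Entrywise, `M₁` is off-diagonal with entries (ii) and (iv), and `M₂` has
(iii) and (v) off the diagonal and `±(iε/2)·(i)` on it. Equation (ii) reads `-2uE = 0` when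
`ε = 0`, so it forces `ε ≠ 0`, and the diagonal of `M₂` then gives (i).
-/

open Matrix

/-- The five equations of the D7 compatibility system with parameters `(ε, a)`
at `x` (equations (7)–(11) of the Painlevé-III (D7) Lax pair, written with
`E = e^{iφ}`). -/
def D7System (ε a : ℂ) (u E p q : ℝ → ℂ) (x : ℝ) : Prop :=
  (deriv u x - u x / (x : ℂ) - ((x : ℂ) / 2) * (p x / E x + q x * E x) = 0) ∧
  (-(ε * (x : ℂ) ^ 2 * deriv p x) / (4 * u x)
      + ε * (x : ℂ) ^ 2 * p x * deriv u x / (4 * (u x) ^ 2)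
      - ε * (x : ℂ) * p x / (2 * u x)
      + Complex.I * ε * a * (x : ℂ) * p x / (2 * u x)
      - 2 * u x * E x = 0) ∧
  ((Complex.I / 2) * u x * deriv E x + (Complex.I / 2) * deriv u x * E x
      - (Complex.I / (2 * (x : ℂ))) * u x * E x
      - (Complex.I * ε ^ 2 / 2) * (x : ℂ) * p x = 0) ∧
  (-(ε * (x : ℂ) ^ 2 * deriv q x) / (4 * u x)
      + ε * (x : ℂ) ^ 2 * q x * deriv u x / (4 * (u x) ^ 2)
      - ε * (x : ℂ) * q x / (2 * u x)
      - Complex.I * ε * a * (x : ℂ) * q x / (2 * u x)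
      - 2 * u x / E x = 0) ∧
  ((Complex.I / 2) * u x * deriv E x / (E x) ^ 2
      - (Complex.I / 2) * deriv u x / E x
      + (Complex.I / (2 * (x : ℂ))) * u x / E x
      + (Complex.I * ε ^ 2 / 2) * (x : ℂ) * q x = 0)

/-- The Pauli matrix `σ₃`. -/
def sigma3 : Matrix (Fin 2) (Fin 2) ℂ := !![1, 0; 0, -1]

/-- The matrix `J(x) = (εx/(4u(x))) · [[0, p(x)], [q(x), 0]]`. -/
noncomputable def Jmat (ε : ℂ) (u p q : ℝ → ℂ) (x : ℝ) : Matrix (Fin 2) (Fin 2) ℂ :=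
  (ε * (x : ℂ) / (4 * u x)) • !![0, p x; q x, 0]

/-- The matrix `K(x) = (u(x)/x) · [[ε, E(x)], [−1/E(x), −ε]]`. -/
noncomputable def Kmat (ε : ℂ) (u E : ℝ → ℂ) (x : ℝ) : Matrix (Fin 2) (Fin 2) ℂ :=
  (u x / (x : ℂ)) • !![ε, E x; -(E x)⁻¹, -ε]

/-- The coefficient matrix `Λ(λ,x)` of the λ-equation of the Lax pair. -/
noncomputable def LambdaMat (ε a : ℂ) (u E p q : ℝ → ℂ) (lam : ℂ) (x : ℝ) :
    Matrix (Fin 2) (Fin 2) ℂ :=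
  (-Complex.I * (x : ℂ)) • sigma3 - (Complex.I * a / (2 * lam)) • sigma3
    - ((x : ℂ) / lam) • Jmat ε u p q x
    + (Complex.I * (x : ℂ) / (2 * lam ^ 2)) • Kmat ε u E x

/-- The coefficient matrix `X(λ,x)` of the x-equation of the Lax pair. -/
noncomputable def Xmat (ε a : ℂ) (u E p q : ℝ → ℂ) (lam : ℂ) (x : ℝ) :
    Matrix (Fin 2) (Fin 2) ℂ :=
  (-Complex.I * lam) • sigma3 + (Complex.I * a / (2 * (x : ℂ))) • sigma3
    - Jmat ε u p q x - (Complex.I / (2 * lam)) • Kmat ε u E x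

attribute [local instance] Matrix.normedAddCommGroup Matrix.normedSpace

section MatrixCalculus

variable {𝕜 F : Type*} [NontriviallyNormedField 𝕜] [NormedAddCommGroup F] [NormedSpace 𝕜 F]
  {x : 𝕜}

theorem Matrix.of_deriv_eq_of_hasDerivAt {m n : Type*} [Fintype n] {f : 𝕜 → Matrix m n F}
    {f' : Matrix m n F} (h : HasDerivAt f f' x) :
    Matrix.of (fun i j => deriv (fun t => f t i j) x) = f' := by
  ext i j
  exact ((hasDerivAt_pi.1 (hasDerivAt_pi.1 h i)) j).deriv

theorem HasDerivAt.matrix_fin_two {f₀₀ f₀₁ f₁₀ f₁₁ : 𝕜 → F} {a b c d : F}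
    (h₀₀ : HasDerivAt f₀₀ a x) (h₀₁ : HasDerivAt f₀₁ b x) (h₁₀ : HasDerivAt f₁₀ c x)
    (h₁₁ : HasDerivAt f₁₁ d x) :
    HasDerivAt (fun t => !![f₀₀ t, f₀₁ t; f₁₀ t, f₁₁ t]) !![a, b; c, d] x := by
  refine hasDerivAt_pi.2 fun i => hasDerivAt_pi.2 fun j => ?_
  fin_cases i <;> fin_cases j <;> simpa

end MatrixCalculus

theorem forall_inv_smul_add_inv_sq_smul_eq_zero_iff {K V : Type*} [Field K] [NeZero (2 : K)]
    [AddCommGroup V] [Module K V] {v w : V} :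
    (∀ l : K, l ≠ 0 → l⁻¹ • v + (l⁻¹) ^ 2 • w = 0) ↔ v = 0 ∧ w = 0 := by
  refine ⟨fun h => ?_, fun ⟨hv, hw⟩ _ _ => by simp [hv, hw]⟩
  have h₁ := h 1 one_ne_zero
  have h₂ := h (-1) (neg_ne_zero.2 one_ne_zero)
  simp only [inv_one, one_pow, one_smul, inv_neg, even_two, Even.neg_pow, neg_smul] at h₁ h₂
  have hw : (2 : K) • w = 0 := by rw [two_smul]; linear_combination (norm := module) h₁ + h₂
  have hw : w = 0 := (smul_eq_zero.1 hw).resolve_left two_ne_zero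
  exact ⟨by simpa [hw] using h₁, hw⟩

section LaxPair

variable {𝕜 A : Type*} [Field 𝕜] [NeZero (2 : 𝕜)] [Ring A] [Algebra 𝕜 A]

theorem laxPair_commutator (S J K : A) {i a x l : 𝕜} (hx : x ≠ 0) (hl : l ≠ 0) :
    let Λ := (-i * x) • S - (i * a / (2 * l)) • S - (x / l) • J + (i * x / (2 * l ^ 2)) • K
    let X := (-i * l) • S + (i * a / (2 * x)) • S - J - (i / (2 * l)) • K
    Λ * X - X * Λ =
      l⁻¹ • ((i * a) • ⁅S, J⁆ + (i ^ 2 * x) • ⁅S, K⁆) + (l⁻¹) ^ 2 • ((i * x) • ⁅J, K⁆) := by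
  intro Λ X
  simp only [Λ, X, Ring.lie_def, sub_mul, add_mul, mul_sub, mul_add, smul_mul_assoc,
    mul_smul_comm, smul_smul, smul_sub]
  match_scalars <;> field_simp <;> ring

end LaxPair

section D7

variable (ε a : ℂ) (u E p q : ℝ → ℂ) (x : ℝ)

namespace D7System

noncomputable def lhs₁ : ℂ :=
  deriv u x - u x / (x : ℂ) - ((x : ℂ) / 2) * (p x / E x + q x * E x)

noncomputable def lhs₂ : ℂ :=
  -(ε * (x : ℂ) ^ 2 * deriv p x) / (4 * u x)
      + ε * (x : ℂ) ^ 2 * p x * deriv u x / (4 * (u x) ^ 2)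
      - ε * (x : ℂ) * p x / (2 * u x)
      + Complex.I * ε * a * (x : ℂ) * p x / (2 * u x)
      - 2 * u x * E x

noncomputable def lhs₃ : ℂ :=
  (Complex.I / 2) * u x * deriv E x + (Complex.I / 2) * deriv u x * E x
      - (Complex.I / (2 * (x : ℂ))) * u x * E x
      - (Complex.I * ε ^ 2 / 2) * (x : ℂ) * p x

noncomputable def lhs₄ : ℂ :=
  -(ε * (x : ℂ) ^ 2 * deriv q x) / (4 * u x)
      + ε * (x : ℂ) ^ 2 * q x * deriv u x / (4 * (u x) ^ 2)
      - ε * (x : ℂ) * q x / (2 * u x)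
      - Complex.I * ε * a * (x : ℂ) * q x / (2 * u x)
      - 2 * u x / E x

noncomputable def lhs₅ : ℂ :=
  (Complex.I / 2) * u x * deriv E x / (E x) ^ 2
      - (Complex.I / 2) * deriv u x / E x
      + (Complex.I / (2 * (x : ℂ))) * u x / E x
      + (Complex.I * ε ^ 2 / 2) * (x : ℂ) * q x

theorem iff_lhs : D7System ε a u E p q x ↔
    lhs₁ u E p q x = 0 ∧ lhs₂ ε a u E p x = 0 ∧ lhs₃ ε u E p x = 0 ∧ lhs₄ ε a u E q x = 0 ∧
      lhs₅ ε u E q x = 0 :=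
  Iff.rfl

end D7System

noncomputable def Jmat' : Matrix (Fin 2) (Fin 2) ℂ :=
  (ε * x / (4 * u x)) • !![0, deriv p x; deriv q x, 0]
    + (ε / (4 * u x) - ε * x * deriv u x / (4 * u x ^ 2)) • !![0, p x; q x, 0]

noncomputable def Kmat' : Matrix (Fin 2) (Fin 2) ℂ :=
  (u x / x) • !![0, deriv E x; deriv E x / E x ^ 2, 0]
    + ((x * deriv u x - u x) / x ^ 2) • !![ε, E x; -(E x)⁻¹, -ε]

variable {ε a u E p q x}

theorem hasDerivAt_Jmat (hu : DifferentiableAt ℝ u x) (hp : DifferentiableAt ℝ p x)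
    (hq : DifferentiableAt ℝ q x) (hux : u x ≠ 0) :
    HasDerivAt (Jmat ε u p q) (Jmat' ε u p q x) x := by
  have hc : HasDerivAt (fun t : ℝ => ε * t / (4 * u t))
      (ε / (4 * u x) - ε * x * deriv u x / (4 * u x ^ 2)) x := by
    refine (((hasDerivAt_id x).ofReal_comp.const_mul ε).div (hu.hasDerivAt.const_mul 4)
      (mul_ne_zero (by norm_num) hux)).congr_deriv ?_
    simp only [id, Complex.ofReal_one]
    field_simp
  exact hc.smul ((hasDerivAt_const x 0).matrix_fin_two hp.hasDerivAt hq.hasDerivAt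
    (hasDerivAt_const x 0))

theorem hasDerivAt_Kmat (hu : DifferentiableAt ℝ u x) (hE : DifferentiableAt ℝ E x)
    (hx : x ≠ 0) (hEx : E x ≠ 0) :
    HasDerivAt (Kmat ε u E) (Kmat' ε u E x) x := by
  have hx' : (x : ℂ) ≠ 0 := Complex.ofReal_ne_zero.2 hx
  have hc : HasDerivAt (fun t : ℝ => u t / t) ((x * deriv u x - u x) / x ^ 2) x := by
    refine (hu.hasDerivAt.div (hasDerivAt_id x).ofReal_comp hx').congr_deriv ?_
    simp only [id, Complex.ofReal_one]
    ring
  have hinv : HasDerivAt (fun t => -(E t)⁻¹) (deriv E x / E x ^ 2) x := by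
    refine ((hasDerivAt_inv hEx).comp x hE.hasDerivAt).neg.congr_deriv ?_
    ring
  exact hc.smul ((hasDerivAt_const x ε).matrix_fin_two hE.hasDerivAt hinv
    (hasDerivAt_const x (-ε)))

theorem hasDerivAt_LambdaMat (hu : DifferentiableAt ℝ u x) (hE : DifferentiableAt ℝ E x)
    (hp : DifferentiableAt ℝ p x) (hq : DifferentiableAt ℝ q x) (hx : x ≠ 0) (hux : u x ≠ 0)
    (hEx : E x ≠ 0) (lam : ℂ) :
    HasDerivAt (fun t => LambdaMat ε a u E p q lam t)
      ((-Complex.I) • sigma3 - ((x / lam) • Jmat' ε u p q x + (1 / lam) • Jmat ε u p q x)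
        + ((Complex.I * x / (2 * lam ^ 2)) • Kmat' ε u E x
          + (Complex.I / (2 * lam ^ 2)) • Kmat ε u E x)) x := by
  have ht : HasDerivAt (fun t : ℝ => (t : ℂ)) 1 x := (hasDerivAt_id x).ofReal_comp
  refine (((((ht.const_mul (-Complex.I)).smul_const sigma3).sub_const
    ((Complex.I * a / (2 * lam)) • sigma3)).sub ((ht.div_const lam).smul
      (hasDerivAt_Jmat hu hp hq hux))).add
    (((ht.const_mul Complex.I).div_const (2 * lam ^ 2)).smul
      (hasDerivAt_Kmat hu hE hx hEx))).congr_deriv ?_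
  simp only [mul_one]

theorem hasDerivAt_Xmat {lam : ℂ} (hl : lam ≠ 0) :
    HasDerivAt (fun l => Xmat ε a u E p q l x)
      ((-Complex.I) • sigma3 + (Complex.I / (2 * lam ^ 2)) • Kmat ε u E x) lam := by
  have hinv :
      HasDerivAt (fun l : ℂ => Complex.I / (2 * l)) (-(Complex.I / (2 * lam ^ 2))) lam := by
    refine ((hasDerivAt_const lam Complex.I).div ((hasDerivAt_id lam).const_mul 2)
      (mul_ne_zero two_ne_zero hl)).congr_deriv ?_
    simp only [id]
    field_simp
    ring
  refine (((((hasDerivAt_id lam).const_mul (-Complex.I)).smul_const sigma3).add_const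
    ((Complex.I * a / (2 * (x : ℂ))) • sigma3)).sub_const (Jmat ε u p q x)).sub
      (hinv.smul_const (Kmat ε u E x)) |>.congr_deriv ?_
  simp only [mul_one, neg_smul, sub_neg_eq_add]

variable (ε a u E p q x) in
noncomputable def zeroCurvature (lam : ℂ) : Matrix (Fin 2) (Fin 2) ℂ :=
  (Matrix.of fun i j => deriv (fun t : ℝ => LambdaMat ε a u E p q lam t i j) x)
    - (Matrix.of fun i j => deriv (fun l : ℂ => Xmat ε a u E p q l x i j) lam)
    + LambdaMat ε a u E p q lam x * Xmat ε a u E p q lam x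
    - Xmat ε a u E p q lam x * LambdaMat ε a u E p q lam x

theorem zeroCurvature_eq (hu : DifferentiableAt ℝ u x) (hE : DifferentiableAt ℝ E x)
    (hp : DifferentiableAt ℝ p x) (hq : DifferentiableAt ℝ q x) (hx : x ≠ 0) (hux : u x ≠ 0)
    (hEx : E x ≠ 0) {lam : ℂ} (hl : lam ≠ 0) :
    zeroCurvature ε a u E p q x lam =
      lam⁻¹ • ((Complex.I * a) • ⁅sigma3, Jmat ε u p q x⁆
          + (Complex.I ^ 2 * x) • ⁅sigma3, Kmat ε u E x⁆
          - (Jmat ε u p q x + (x : ℂ) • Jmat' ε u p q x))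
        + (lam⁻¹) ^ 2 • ((Complex.I * x / 2) • Kmat' ε u E x
          + (Complex.I * x) • ⁅Jmat ε u p q x, Kmat ε u E x⁆) := by
  rw [zeroCurvature,
    of_deriv_eq_of_hasDerivAt (hasDerivAt_LambdaMat hu hE hp hq hx hux hEx lam),
    of_deriv_eq_of_hasDerivAt (hasDerivAt_Xmat hl), add_sub_assoc]
  unfold LambdaMat Xmat
  rw [laxPair_commutator _ _ _ (Complex.ofReal_ne_zero.2 hx) hl]
  module

theorem zeroCurvature_coeff₁_eq (hx : x ≠ 0) (hux : u x ≠ 0) :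
    (Complex.I * a) • ⁅sigma3, Jmat ε u p q x⁆ + (Complex.I ^ 2 * x) • ⁅sigma3, Kmat ε u E x⁆
        - (Jmat ε u p q x + (x : ℂ) • Jmat' ε u p q x) =
      !![0, D7System.lhs₂ ε a u E p x; D7System.lhs₄ ε a u E q x, 0] := by
  have hx' : (x : ℂ) ≠ 0 := Complex.ofReal_ne_zero.2 hx
  ext i j
  fin_cases i <;> fin_cases j <;>
    simp only [Fin.zero_eta, Fin.mk_one, Fin.isValue, Matrix.sub_apply, Matrix.add_apply,
      Matrix.smul_apply, Ring.lie_def, Matrix.mul_apply, Fin.sum_univ_two, sigma3, Jmat, Jmat',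
      Kmat, of_apply, cons_val', cons_val_zero, cons_val_one, empty_val', cons_val_fin_one,
      smul_eq_mul, Complex.I_sq, D7System.lhs₂, D7System.lhs₄] <;>
    field_simp <;> ring

theorem zeroCurvature_coeff₂_eq (hx : x ≠ 0) (hux : u x ≠ 0) (hEx : E x ≠ 0) :
    (Complex.I * x / 2) • Kmat' ε u E x + (Complex.I * x) • ⁅Jmat ε u p q x, Kmat ε u E x⁆ =
      !![Complex.I * ε / 2 * D7System.lhs₁ u E p q x, D7System.lhs₃ ε u E p x;
        D7System.lhs₅ ε u E q x, -(Complex.I * ε / 2 * D7System.lhs₁ u E p q x)] := by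
  have hx' : (x : ℂ) ≠ 0 := Complex.ofReal_ne_zero.2 hx
  ext i j
  fin_cases i <;> fin_cases j <;>
    simp only [Fin.zero_eta, Fin.mk_one, Fin.isValue, Matrix.sub_apply, Matrix.add_apply,
      Matrix.smul_apply, Ring.lie_def, Matrix.mul_apply, Fin.sum_univ_two, Jmat, Kmat', Kmat,
      of_apply, cons_val', cons_val_zero, cons_val_one, empty_val', cons_val_fin_one,
      smul_eq_mul, D7System.lhs₁, D7System.lhs₃, D7System.lhs₅] <;>
    field_simp <;> ring

theorem coeffs_eq_zero_iff_d7System (hux : u x ≠ 0) (hEx : E x ≠ 0) :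
    (!![0, D7System.lhs₂ ε a u E p x; D7System.lhs₄ ε a u E q x, 0] = 0 ∧
      !![Complex.I * ε / 2 * D7System.lhs₁ u E p q x, D7System.lhs₃ ε u E p x;
        D7System.lhs₅ ε u E q x, -(Complex.I * ε / 2 * D7System.lhs₁ u E p q x)] = 0) ↔
      D7System ε a u E p q x := by
  have hε : D7System.lhs₂ ε a u E p x = 0 → ε ≠ 0 := by
    rintro h rfl
    simp [D7System.lhs₂, hux, hEx] at h
  simp only [D7System.iff_lhs, ← Matrix.ext_iff, Fin.forall_fin_two, of_apply, cons_val',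
    cons_val_fin_one, Matrix.zero_apply, cons_val_zero, cons_val_one, true_and, and_true,
    neg_eq_zero]
  constructor
  · rintro ⟨⟨h₂, h₄⟩, ⟨h₁, h₃⟩, h₅, -⟩
    have hc : Complex.I * ε / 2 ≠ 0 :=
      div_ne_zero (mul_ne_zero Complex.I_ne_zero (hε h₂)) two_ne_zero
    exact ⟨(mul_eq_zero.1 h₁).resolve_left hc, h₂, h₃, h₄, h₅⟩
  · rintro ⟨h₁, h₂, h₃, h₄, h₅⟩
    simp only [h₁, mul_zero, h₂, h₃, h₄, h₅, and_self]

end D7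

/-- The zero-curvature identity `Λ_x − X_λ + [Λ, X] = 0` holds for every `λ ≠ 0`
if and only if the five equations of the D7 compatibility system with parameters
`(ε, a)` hold at `x`. -/
theorem stmt_3 (ε a : ℂ) (x : ℝ) (hx : 0 < x) (u E p q : ℝ → ℂ)
    (hu : DifferentiableAt ℝ u x) (hE : DifferentiableAt ℝ E x)
    (hp : DifferentiableAt ℝ p x) (hq : DifferentiableAt ℝ q x)
    (hux : u x ≠ 0) (hEx : E x ≠ 0) :
    (∀ lam : ℂ, lam ≠ 0 →
      (Matrix.of fun i j => deriv (fun t : ℝ => LambdaMat ε a u E p q lam t i j) x)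
        - (Matrix.of fun i j => deriv (fun l : ℂ => Xmat ε a u E p q l x i j) lam)
        + LambdaMat ε a u E p q lam x * Xmat ε a u E p q lam x
        - Xmat ε a u E p q lam x * LambdaMat ε a u E p q lam x = 0)
      ↔ D7System ε a u E p q x := by
  change (∀ lam : ℂ, lam ≠ 0 → zeroCurvature ε a u E p q x lam = 0) ↔ _
  rw [← coeffs_eq_zero_iff_d7System hux hEx,
    ← forall_inv_smul_add_inv_sq_smul_eq_zero_iff (K := ℂ)]
  refine forall₂_congr fun lam hl => ?_
  rw [zeroCurvature_eq hu hE hp hq hx.ne' hux hEx hl, zeroCurvature_coeff₁_eq hx.ne' hux,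
    zeroCurvature_coeff₂_eq hx.ne' hux hEx]
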